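/- Let n ≥ 2 and let N be an n×n matrix over ℤ with entries in {0,1}, N² = 0, and suppose (N·Nᵀ)_{ij} ≤ 1 for all i ≠ j (i.e., the quiver contains no full subquiver Ã_{2,2}). Set C = I − N, φ(X) = det(X•C + Cᵀ), d_i = Σ_j N_{ij} + Σ_j N_{ji}, and e = (Σ_i d_i)/2. Then φ.coeff(n−1) = n − e and 2·φ.coeff(n−2) = (n−e)(n−1−e) + 2e − Σ_{i=1}^{n} d_i(d_i−1); in particular the coefficients a₁ and a₂ of the Coxeter polynomial depend only on the degrees d₁,…,d_n. -/

import Mathlib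

/-!
Because `N² = 0`, the matrix `C = 1 - N` has inverse `1 + N` and determinant `1`, so
`φ = det (X • 1 + A)` is the characteristic polynomial of `-A`, where
`A = C⁻¹ Cᵀ = (1 + N)(1 - Nᵀ)`. Its two top coefficients are `tr A` and the sum of the principal
`2 × 2` minors of `A`, which is `((tr A)² - tr (A²)) / 2`. With `P = N Nᵀ` one finds
`tr A = n - tr P` and `tr (A²) = n - 4 tr P + tr (P²)`. For a `0/1` matrix `tr P = e`, and
`tr (P²) = Σ_{i,j} P_ij²` where the off-diagonal `P_ij` count common successors, hence lie in
`{0, 1}` without `Ã₂,₂`; this gives `tr (P²) = Σ_i (r_i² + c_i²) - e` for the out- and in-degrees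
`r_i, c_i`, and `r_i c_i = 0` since every vertex is a source or a sink, so `r_i² + c_i² = d_i²`.
-/

open Polynomial Matrix

namespace Finset

theorem two_nsmul_sum_powersetCard_two {ι M : Type*} [DecidableEq ι] [AddCommMonoid M]
    (s : Finset ι) (f : Finset ι → M) :
    2 • ∑ t ∈ s.powersetCard 2, f t = ∑ p ∈ s.offDiag, f {p.1, p.2} := by
  have hmaps : ∀ p ∈ s.offDiag, ({p.1, p.2} : Finset ι) ∈ s.powersetCard 2 := by
    rintro ⟨a, b⟩ hp
    obtain ⟨ha, hb, hab⟩ := mem_offDiag.1 hp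
    simp [mem_powersetCard, insert_subset_iff, ha, hb, card_pair hab]
  rw [← sum_fiberwise_of_maps_to' hmaps, smul_sum]
  refine sum_congr rfl fun t ht => ?_
  obtain ⟨hts, htcard⟩ := mem_powersetCard.1 ht
  obtain ⟨x, y, hxy, rfl⟩ := card_eq_two.1 htcard
  have hfiber : {p ∈ s.offDiag | ({p.1, p.2} : Finset ι) = {x, y}} = {(x, y), (y, x)} := by
    ext ⟨a, b⟩
    simp only [mem_filter, mem_offDiag, mem_insert, mem_singleton, Prod.mk.injEq, ← coe_inj,
      coe_pair, Set.pair_eq_pair_iff]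
    have hx := hts (mem_insert_self x {y})
    have hy := hts (mem_insert_of_mem (mem_singleton_self y))
    constructor
    · exact fun h => h.2
    · rintro (⟨rfl, rfl⟩ | ⟨rfl, rfl⟩)
      exacts [⟨⟨hx, hy, hxy⟩, .inl ⟨rfl, rfl⟩⟩, ⟨⟨hy, hx, hxy.symm⟩, .inr ⟨rfl, rfl⟩⟩]
  rw [sum_const, hfiber, card_pair (by simp [hxy])]

end Finset

namespace Matrix

section Charpoly

variable {n R : Type*} [DecidableEq n] [CommRing R]

theorem det_submatrix_pair (M : Matrix n n R) {i j : n} (hij : i ≠ j) :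
    (M.submatrix (Subtype.val : ({i, j} : Finset n) → n) Subtype.val).det
      = M i i * M j j - M i j * M j i := by
  let e : Fin 2 ≃ ({i, j} : Finset n) :=
    Equiv.ofBijective ![⟨i, by simp⟩, ⟨j, by simp⟩] ⟨fun a b => by
      fin_cases a <;> fin_cases b <;> simp [hij, hij.symm], by
      rintro ⟨x, hx⟩
      rcases Finset.mem_insert.1 hx with rfl | hx
      · exact ⟨0, rfl⟩
      · exact ⟨1, by simp [Finset.mem_singleton.1 hx]⟩⟩
  rw [← det_submatrix_equiv_self e, det_fin_two]
  rfl

variable [Fintype n]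

theorem two_mul_charpoly_coeff_card_sub_two (M : Matrix n n R) (hn : 2 ≤ Fintype.card n) :
    2 * M.charpoly.coeff (Fintype.card n - 2) = M.trace ^ 2 - (M * M).trace := by
  have hpair : ∀ p ∈ (Finset.univ : Finset n).offDiag,
      (M.submatrix (Subtype.val : ({p.1, p.2} : Finset n) → n) Subtype.val).det
        = M p.1 p.1 * M p.2 p.2 - M p.1 p.2 * M p.2 p.1 :=
    fun p hp => det_submatrix_pair M (Finset.mem_offDiag.1 hp).2.2
  rw [charpoly_coeff_eq_sum_minors M 2 hn, neg_one_sq, one_mul, two_mul, ← two_nsmul,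
    Finset.two_nsmul_sum_powersetCard_two, Finset.sum_congr rfl hpair]
  have hdiag : ∀ p ∈ (Finset.univ : Finset n) ×ˢ Finset.univ, p ∉ Finset.univ.offDiag →
      M p.1 p.1 * M p.2 p.2 - M p.1 p.2 * M p.2 p.1 = 0 := by
    rintro ⟨i, j⟩ - hp
    obtain rfl : i = j := by simpa using hp
    exact sub_self _
  rw [Finset.sum_subset (fun p => by simp) hdiag, Finset.sum_product, sq, trace, trace,
    Finset.sum_mul_sum]
  simp only [diag_apply, mul_apply, ← Finset.sum_sub_distrib]

theorem det_one_sub_of_isNilpotent [IsReduced R] {N : Matrix n n R} (hN : IsNilpotent N) :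
    (1 - N).det = 1 := by
  have hnil := isNilpotent_charpoly_sub_pow_of_isNilpotent hN
  have hcharpoly : N.charpoly = X ^ Fintype.card n :=
    sub_eq_zero.1 <| Polynomial.ext fun i => by
      simpa using (Polynomial.isNilpotent_iff.1 hnil i).eq_zero
  simpa [hcharpoly] using (N.eval_charpoly 1).symm

theorem det_X_smul_map_add_map_mul (M A : Matrix n n R) :
    ((X : R[X]) • M.map C + (M * A).map C).det = C M.det * (-A).charpoly := by
  have hcharmatrix : charmatrix (-A) = (X : R[X]) • 1 + A.map C := by
    ext i j
    by_cases hij : i = j <;> simp [hij]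
  have hfactor :
      (X : R[X]) • M.map C + (M * A).map C = M.map C * ((X : R[X]) • 1 + A.map C) := by
    rw [mul_add, Matrix.mul_smul, mul_one, Matrix.map_mul]
  rw [charpoly, hcharmatrix, hfactor, det_mul, ← RingHom.mapMatrix_apply, ← RingHom.map_det]

theorem trace_one_add_mul_one_sub_transpose (N : Matrix n n R) :
    ((1 + N) * (1 - Nᵀ)).trace = Fintype.card n - (N * Nᵀ).trace := by
  simp only [add_mul, mul_sub, one_mul, mul_one, trace_add, trace_sub, trace_one,
    trace_transpose]
  ring

theorem trace_sq_one_add_mul_one_sub_transpose {N : Matrix n n R} (hN : N * N = 0) :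
    ((1 + N) * (1 - Nᵀ) * ((1 + N) * (1 - Nᵀ))).trace
      = Fintype.card n - 4 * (N * Nᵀ).trace + (N * Nᵀ * (N * Nᵀ)).trace := by
  have hNT : Nᵀ * Nᵀ = 0 := by rw [← transpose_mul, hN, transpose_zero]
  have hexpand : (1 + N) * (1 - Nᵀ) * ((1 + N) * (1 - Nᵀ))
      = 1 + 2 • (N - Nᵀ - N * Nᵀ) - N * Nᵀ - Nᵀ * N + Nᵀ * (N * Nᵀ) - N * Nᵀ * N
          + N * Nᵀ * (N * Nᵀ) + N * N * (1 - Nᵀ) + (1 + N) * (Nᵀ * Nᵀ) := by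
    noncomm_ring
  have hcubic₁ : (Nᵀ * (N * Nᵀ)).trace = 0 := by
    rw [trace_mul_comm, Matrix.mul_assoc, hNT, Matrix.mul_zero, trace_zero]
  have hcubic₂ : (N * Nᵀ * N).trace = 0 := by
    rw [trace_mul_comm, ← Matrix.mul_assoc, hN, Matrix.zero_mul, trace_zero]
  rw [hexpand, hN, hNT]
  simp only [trace_add, trace_sub, trace_smul, trace_one, trace_transpose, hcubic₁, hcubic₂,
    trace_mul_comm Nᵀ N, Matrix.zero_mul, Matrix.mul_zero, trace_zero]
  ring

end Charpoly

section ZeroOne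

variable {n : Type*} [Fintype n]

theorem sum_sum_mul_transpose_apply {R : Type*} [CommSemiring R] (N : Matrix n n R) :
    ∑ i, ∑ j, (N * Nᵀ) i j = ∑ k, (∑ i, N i k) ^ 2 := by
  simp only [mul_apply, transpose_apply, sq, Finset.sum_mul_sum]
  exact (Finset.sum_congr rfl fun i _ => Finset.sum_comm).trans Finset.sum_comm

variable {N : Matrix n n ℤ}

theorem mul_transpose_apply_self_of_zero_or_one (h01 : ∀ i j, N i j = 0 ∨ N i j = 1) (i : n) :
    (N * Nᵀ) i i = ∑ j, N i j := by
  simp only [mul_apply, transpose_apply]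
  refine Finset.sum_congr rfl fun j _ => ?_
  rcases h01 i j with h | h <;> simp [h]

theorem sum_mul_sum_eq_zero_of_mul_self_eq_zero (hN : ∀ i j, 0 ≤ N i j) (hN2 : N * N = 0)
    (i : n) : (∑ j, N i j) * (∑ j, N j i) = 0 := by
  rw [Finset.sum_mul_sum]
  refine Finset.sum_eq_zero fun j _ => Finset.sum_eq_zero fun k _ => ?_
  have hkj : (N * N) k j = 0 := by rw [hN2, zero_apply]
  rw [mul_apply] at hkj
  rw [mul_comm]
  exact (Finset.sum_eq_zero_iff_of_nonneg fun l _ => mul_nonneg (hN k l) (hN l j)).1 hkj i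
    (Finset.mem_univ i)

theorem trace_mul_transpose_sq_of_zero_or_one [DecidableEq n]
    (h01 : ∀ i j, N i j = 0 ∨ N i j = 1) (hA22 : ∀ i j, i ≠ j → (N * Nᵀ) i j ≤ 1) :
    (N * Nᵀ * (N * Nᵀ)).trace
      = ∑ i, ((∑ j, N i j) ^ 2 + (∑ j, N j i) ^ 2) - (N * Nᵀ).trace := by
  set P := N * Nᵀ with hP
  have hsymm : ∀ i j, P j i = P i j := fun i j => by
    rw [← transpose_apply P, hP, transpose_mul, transpose_transpose]
  have hN : ∀ i j, 0 ≤ N i j := fun i j => by rcases h01 i j with h | h <;> simp [h]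
  have hnonneg : ∀ i j, 0 ≤ P i j := fun i j =>
    Finset.sum_nonneg fun k _ => mul_nonneg (hN i k) (hN j k)
  have hentry : ∀ i j, P i j * P j i = P i j + if i = j then P i i ^ 2 - P i i else 0 := by
    intro i j
    rcases eq_or_ne i j with rfl | hij
    · simp [sq]
    · have hP01 : P i j = 0 ∨ P i j = 1 := by
        have := hnonneg i j
        have := hA22 i j hij
        omega
      rw [hsymm i j, if_neg hij]
      rcases hP01 with h | h <;> simp [h]
  calc (P * P).trace = ∑ i, ∑ j, P i j * P j i := by simp only [trace, diag_apply, mul_apply]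
    _ = ∑ i, ∑ j, P i j + ∑ i, (P i i ^ 2 - P i i) := by
      simp only [hentry, Finset.sum_add_distrib, Finset.sum_ite_eq, Finset.mem_univ, if_true]
    _ = _ := by
      simp only [hP, sum_sum_mul_transpose_apply, mul_transpose_apply_self_of_zero_or_one h01,
        Finset.sum_sub_distrib, Finset.sum_add_distrib, trace, diag_apply]
      ring

end ZeroOne

end Matrix

/-- Corollary of Theorem 1.1: for a bipartite quiver without parallel arrows and
without a full subquiver of type `Ã₂,₂` (i.e. `(N Nᵀ)_{ij} ≤ 1` for `i ≠ j`), the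
first two coefficients of the Coxeter polynomial depend only on the vertex degrees. -/
theorem coxeter_coeffs_depend_only_on_degrees (n : ℕ) (hn : 2 ≤ n)
    (N : Matrix (Fin n) (Fin n) ℤ)
    (h01 : ∀ i j, N i j = 0 ∨ N i j = 1) (hN2 : N * N = 0)
    (hA22 : ∀ i j, i ≠ j → (N * Nᵀ) i j ≤ 1) :
    let C : Matrix (Fin n) (Fin n) ℤ := 1 - N
    let φ : ℤ[X] := ((X : ℤ[X]) • C.map Polynomial.C + Cᵀ.map Polynomial.C).det
    let d : Fin n → ℤ := fun i => (∑ j, N i j) + (∑ j, N j i)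
    let e : ℤ := (∑ i, d i) / 2
    φ.coeff (n - 1) = n - e ∧
      2 * φ.coeff (n - 2) =
        (n - e) * (n - 1 - e) + 2 * e - ∑ i, d i * (d i - 1) := by
  intro C φ d e
  set A := (1 + N) * (1 - Nᵀ)
  have hCA : C * A = Cᵀ := by
    have hexpand : (1 - N) * ((1 + N) * (1 - Nᵀ)) = (1 - N * N) * (1 - Nᵀ) := by noncomm_ring
    rw [hexpand, hN2, sub_zero, Matrix.one_mul, transpose_sub, transpose_one]
  have hφ : φ = (-A).charpoly := by
    rw [show φ = ((X : ℤ[X]) • C.map Polynomial.C + (C * A).map Polynomial.C).det by rw [hCA],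
      det_X_smul_map_add_map_mul, det_one_sub_of_isNilpotent ⟨2, by rw [sq, hN2]⟩, map_one,
      one_mul]
  have htrace : (N * Nᵀ).trace = ∑ i, ∑ j, N i j :=
    Finset.sum_congr rfl fun i _ => mul_transpose_apply_self_of_zero_or_one h01 i
  have hsum : ∑ i, d i = 2 * (N * Nᵀ).trace := by
    simp only [d, Finset.sum_add_distrib, htrace]
    rw [Finset.sum_comm (f := fun i j => N j i)]
    ring
  have he : e = (N * Nᵀ).trace := by
    simp only [e, hsum, Int.mul_ediv_cancel_left _ two_ne_zero]
  have hdegrees : ∑ i, d i * (d i - 1)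
      = ∑ i, ((∑ j, N i j) ^ 2 + (∑ j, N j i) ^ 2) - 2 * (N * Nᵀ).trace := by
    have hnonneg : ∀ i j, 0 ≤ N i j := fun i j => by rcases h01 i j with h | h <;> simp [h]
    have hrc := sum_mul_sum_eq_zero_of_mul_self_eq_zero hnonneg hN2
    rw [← hsum, ← Finset.sum_sub_distrib]
    exact Finset.sum_congr rfl fun i _ => by linear_combination 2 * hrc i
  have : Nonempty (Fin n) := ⟨⟨0, by omega⟩⟩
  constructor
  · have h1 := trace_eq_neg_charpoly_coeff (-A)
    rw [Fintype.card_fin, ← hφ, trace_neg, trace_one_add_mul_one_sub_transpose,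
      Fintype.card_fin] at h1
    rw [he]
    linear_combination h1
  · have h2 := two_mul_charpoly_coeff_card_sub_two (-A) (by simpa using hn)
    rw [Fintype.card_fin, ← hφ, trace_neg, neg_mul_neg, trace_one_add_mul_one_sub_transpose,
      trace_sq_one_add_mul_one_sub_transpose hN2, trace_mul_transpose_sq_of_zero_or_one h01 hA22,
      Fintype.card_fin] at h2
    rw [h2, he, hdegrees]
    ring
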